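/- Let M be a 3-connected matroid and z ∈ E(M). Then M has a vertical 3-separation (X, {z}, Y) if and only if the simplification of M/z is not 3-connected. -/

import Mathlib

open Set Matroid

namespace NDP

variable {α : Type*}

/-- The rank of a set in a matroid: the supremum of sizes of independent subsets. -/
noncomputable def rk (M : Matroid α) (X : Set α) : ℕ :=
  sSup {n | ∃ I, M.Indep I ∧ I ⊆ X ∧ I.ncard = n}

/-- A circuit: a minimal dependent subset of the ground set. -/
def Circuit (M : Matroid α) (C : Set α) : Prop :=
  C ⊆ M.E ∧ ¬ M.Indep C ∧ ∀ x ∈ C, M.Indep (C \ {x})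

/-- A cocircuit: a circuit of the dual matroid. -/
def Cocircuit (M : Matroid α) (C : Set α) : Prop := Circuit M✶ C

/-- Deletion of a set of elements. -/
def delete (M : Matroid α) (D : Set α) : Matroid α := M ↾ (M.E \ D)

/-- Contraction of a set of elements. -/
def contract (M : Matroid α) (C : Set α) : Matroid α := (delete M✶ C)✶

/-- The connectivity function `λ_M(X) = r(X) + r(E − X) − r(M)`. -/
noncomputable def lambda (M : Matroid α) (X : Set α) : ℤ :=
  (rk M X : ℤ) + (rk M (M.E \ X) : ℤ) - (rk M M.E : ℤ)

/-- `S` gives a `k`-separation `(S, E − S)` of `M`. -/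
def IsKSeparation (M : Matroid α) (k : ℕ) (S : Set α) : Prop :=
  S ⊆ M.E ∧ lambda M S ≤ (k : ℤ) - 1 ∧ k ≤ S.ncard ∧ k ≤ (M.E \ S).ncard

/-- A matroid is connected (2-connected) if it has no 1-separation. -/
def Connected (M : Matroid α) : Prop := ∀ S, ¬ IsKSeparation M 1 S

/-- A matroid is 3-connected if it has no `k`-separation for `k < 3`. -/
def ThreeConnected (M : Matroid α) : Prop := ∀ k < 3, ∀ S, ¬ IsKSeparation M k S

/-- Isomorphism of two matroids on the same type. -/
def Iso (M N : Matroid α) : Prop :=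
  ∃ e : M.E ≃ N.E,
    ∀ I : Set M.E, M.Indep (Subtype.val '' I) ↔ N.Indep (Subtype.val '' (e '' I))

/-- `N` is a minor of `M`. -/
def IsMinor (N M : Matroid α) : Prop :=
  ∃ C D : Set α, C ⊆ M.E ∧ D ⊆ M.E ∧ Disjoint C D ∧ N = delete (contract M C) D

/-- `M` has a minor isomorphic to `N`. -/
def HasMinorIso (M N : Matroid α) : Prop := ∃ M', IsMinor M' M ∧ Iso M' N

/-- `N` is a simplification of `M`: the restriction of `M` to a set of representatives,
one from each parallel class of nonloop elements. -/
def IsSimplification (M N : Matroid α) : Prop :=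
  ∃ X ⊆ M.E, N = M ↾ X ∧
    (∀ e ∈ X, M.Indep {e}) ∧
    (∀ e f, e ∈ X → f ∈ X → e ∈ M.closure {f} → e = f) ∧
    (∀ e ∈ M.E, M.Indep {e} → ∃ f ∈ X, e ∈ M.closure {f})

/-- `si M` is 3-connected. -/
def SiThreeConnected (M : Matroid α) : Prop :=
  ∀ N, IsSimplification M N → ThreeConnected N

/-- `co M` is 3-connected; the cosimplification is the dual of the simplification of the dual. -/
def CoThreeConnected (M : Matroid α) : Prop :=
  ∀ N, IsSimplification M✶ N → ThreeConnected N✶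

end NDP

/-!
For a nonloop `z` and a partition `(X, Y)` of `E − z`, the rank formula
`r_{M/z}(T) = r_M(T ∪ z) − 1` gives `λ_M(X) = λ_{M/z}(X) + 1` when `z ∈ cl(X)` and
`λ_M(X) = λ_{M/z}(X)` otherwise.

A vertical 3-separation `(X, {z}, Y)` therefore becomes a 2-separation of `M/z` with both sides
of rank at least 2, and such a separation cannot disappear in a simplification: the
representatives in `cl_{M/z}(X)` and those outside it still form a 1- or 2-separation.

Conversely, a `k`-separation of `si(M/z)` lifts to `M/z` by sending every element to the side of
its representative, keeping both sides of rank at least `k`. A side not spanning `z` would be a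
`k`-separation of `M`, so `z` lies in the closure of both sides. Adding `z` to either side then
gives a `(k + 1)`-separation of `M` whose sides have rank at least `k + 1`: this is excluded for
`k = 1`, and for `k = 2` it is a vertical 3-separation.
-/

namespace NDP

lemma insert_sdiff_singleton_sdiff {E X : Set α} {e : α} (he : e ∈ E) (heX : e ∉ X) :
    insert e ((E \ {e}) \ X) = E \ X := by
  rw [sdiff_sdiff_comm, insert_sdiff_singleton,
    insert_eq_of_mem (show e ∈ E \ X from ⟨he, heX⟩)]

lemma sdiff_singleton_sdiff_eq {E X Y : Set α} {z : α} (hXY : Disjoint X Y) (hzY : z ∉ Y)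
    (hE : X ∪ {z} ∪ Y = E) : (E \ {z}) \ X = Y := by
  subst hE
  ext x
  have hxX : x ∈ X → x ∉ Y := fun h => disjoint_left.1 hXY h
  have hxz : x ∈ Y → x ≠ z := fun h hxz => hzY (hxz ▸ h)
  simp only [mem_sdiff, mem_union, mem_singleton_iff]
  tauto

section Rank

variable {M : Matroid α} [M.RankFinite] {X Y : Set α} {e : α}

lemma cast_rk (M : Matroid α) [M.RankFinite] (X : Set α) : (rk M X : ℕ∞) = M.eRk X := by
  obtain ⟨I, hI⟩ := M.exists_isBasis' X
  rw [← hI.encard_eq_eRk, ← hI.indep.finite.cast_ncard_eq, Nat.cast_inj]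
  refine IsGreatest.csSup_eq ⟨⟨I, hI.indep, hI.subset, rfl⟩, ?_⟩
  rintro _ ⟨J, hJ, hJX, rfl⟩
  have hJI := hJ.encard_le_eRk_of_subset hJX
  rwa [← hI.encard_eq_eRk, ← hJ.finite.cast_ncard_eq, ← hI.indep.finite.cast_ncard_eq,
    Nat.cast_le] at hJI

lemma rk_mono (hXY : X ⊆ Y) : rk M X ≤ rk M Y := by
  rw [← Nat.cast_le (α := ℕ∞), cast_rk, cast_rk]
  exact M.eRk_mono hXY

lemma rk_le_of_subset_closure (hXY : X ⊆ M.closure Y) : rk M X ≤ rk M Y := by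
  rw [← Nat.cast_le (α := ℕ∞), cast_rk, cast_rk, ← M.eRk_closure_eq Y]
  exact M.eRk_mono hXY

lemma rk_le_ncard (hX : X.Finite) : rk M X ≤ X.ncard := by
  rw [← Nat.cast_le (α := ℕ∞), cast_rk, hX.cast_ncard_eq]
  exact M.eRk_le_encard X

lemma rk_union_le (X Y : Set α) : rk M (X ∪ Y) ≤ rk M X + rk M Y := by
  rw [← Nat.cast_le (α := ℕ∞), Nat.cast_add, cast_rk, cast_rk, cast_rk]
  exact M.eRk_union_le_eRk_add_eRk X Y

lemma rk_insert_of_mem_closure (he : e ∈ M.closure X) : rk M (insert e X) = rk M X := by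
  rw [← Nat.cast_inj (R := ℕ∞), cast_rk, cast_rk, ← eRk_insert_closure_eq,
    insert_eq_of_mem he, eRk_closure_eq]

lemma rk_insert_of_notMem_closure (he : e ∈ M.E \ M.closure X) :
    rk M (insert e X) = rk M X + 1 := by
  rw [← Nat.cast_inj (R := ℕ∞), Nat.cast_add, cast_rk, cast_rk, eRk_insert_eq_add_one he,
    Nat.cast_one]

lemma rk_restrict {R : Set α} (hXR : X ⊆ R) : rk (M ↾ R) X = rk M X := by
  rw [← Nat.cast_inj (R := ℕ∞), cast_rk, cast_rk, restrict_eRk_eq _ hXR]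

lemma rk_singleton_of_isNonloop (he : M.IsNonloop e) : rk M {e} = 1 := by
  rw [← Nat.cast_inj (R := ℕ∞), cast_rk, he.eRk_eq, Nat.cast_one]

lemma rk_contractElem_add_one (he : M.IsNonloop e) (hX : X ⊆ M.E \ {e}) :
    rk (M ／ {e}) X + 1 = rk M (insert e X) := by
  obtain ⟨J, hJ⟩ := (M ／ {e}).exists_isBasis X hX
  have heJ : e ∉ J := fun h => (hJ.indep.subset_ground h).2 rfl
  have hJe := he.indep.union_isBasis_union_of_contract_isBasis hJ
  rw [union_singleton, union_singleton] at hJe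
  rw [← Nat.cast_inj (R := ℕ∞), Nat.cast_add, cast_rk, cast_rk, ← hJ.encard_eq_eRk,
    ← hJe.encard_eq_eRk, encard_insert_of_notMem heJ, Nat.cast_one]

lemma rk_contractElem_of_mem_closure (he : M.IsNonloop e) (hX : X ⊆ M.E \ {e})
    (heX : e ∈ M.closure X) : rk M X = rk (M ／ {e}) X + 1 := by
  rw [rk_contractElem_add_one he hX, rk_insert_of_mem_closure heX]

end Rank

section Connectivity

variable {M : Matroid α} {X : Set α} {e : α} {k : ℕ}

lemma lambda_nonneg [M.RankFinite] (hX : X ⊆ M.E) : 0 ≤ lambda M X := by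
  have h := rk_union_le (M := M) X (M.E \ X)
  rw [union_sdiff_cancel hX] at h
  unfold lambda
  omega

lemma lambda_compl (hX : X ⊆ M.E) : lambda M (M.E \ X) = lambda M X := by
  unfold lambda
  rw [sdiff_sdiff_cancel_left hX]
  ring

lemma IsKSeparation.compl (h : IsKSeparation M k X) : IsKSeparation M k (M.E \ X) := by
  obtain ⟨hX, hlam, hkX, hkY⟩ := h
  refine ⟨sdiff_subset, by rwa [lambda_compl hX], hkY, ?_⟩
  rwa [sdiff_sdiff_cancel_left hX]

lemma ThreeConnected.le_lambda (hM : ThreeConnected M) (hX : X ⊆ M.E) (hk : k < 3)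
    (hkX : k ≤ X.ncard) (hkY : k ≤ (M.E \ X).ncard) : (k : ℤ) ≤ lambda M X := by
  by_contra h
  exact hM k hk X ⟨hX, by omega, hkX, hkY⟩

lemma ThreeConnected.two_le_lambda [M.Finite] (hM : ThreeConnected M) (hX : X ⊆ M.E)
    (hrX : 2 ≤ rk M X) (hrY : 2 ≤ rk M (M.E \ X)) : 2 ≤ lambda M X :=
  hM.le_lambda hX (k := 2) (by norm_num) (hrX.trans (rk_le_ncard (M.ground_finite.subset hX)))
    (hrY.trans (rk_le_ncard M.ground_finite.sdiff))

lemma ThreeConnected.isNonloop [M.Finite] (hM : ThreeConnected M) (he : e ∈ M.E)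
    (hne : (M.E \ {e}).Nonempty) : M.IsNonloop e := by
  have hlam := hM.le_lambda (singleton_subset_iff.2 he) (k := 1) (by norm_num) (by simp)
    (Nat.one_le_iff_ne_zero.2 (ncard_pos M.ground_finite.sdiff |>.2 hne).ne')
  have hle := rk_mono (M := M) (sdiff_subset : M.E \ {e} ⊆ M.E)
  have h1 : rk M {e} ≤ 1 := by simpa using rk_le_ncard (M := M) (finite_singleton e)
  unfold lambda at hlam
  rw [← eRk_singleton_eq_one_iff, ← cast_rk]
  exact_mod_cast (show rk M {e} = 1 by omega)

lemma lambda_contractElem_add [M.RankFinite] (he : M.IsNonloop e) (hX : X ⊆ M.E \ {e}) :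
    lambda (M ／ {e}) X + rk M X + 1 = lambda M X + rk M (insert e X) := by
  have hXc := rk_contractElem_add_one he hX
  have hYc := rk_contractElem_add_one he (sdiff_subset (s := M.E \ {e}) (t := X))
  have hEc := rk_contractElem_add_one he (subset_refl (M.E \ {e}))
  rw [insert_sdiff_singleton_sdiff he.mem_ground (fun h => (hX h).2 rfl)] at hYc
  rw [insert_sdiff_singleton, insert_eq_of_mem he.mem_ground] at hEc
  unfold lambda
  rw [contract_ground]
  omega

lemma lambda_contractElem_of_mem_closure [M.RankFinite] (he : M.IsNonloop e)
    (hX : X ⊆ M.E \ {e}) (heX : e ∈ M.closure X) : lambda M X = lambda (M ／ {e}) X + 1 := by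
  have h := lambda_contractElem_add he hX
  rw [rk_insert_of_mem_closure heX] at h
  omega

lemma lambda_contractElem_of_notMem_closure [M.RankFinite] (he : M.IsNonloop e)
    (hX : X ⊆ M.E \ {e}) (heX : e ∉ M.closure X) : lambda M X = lambda (M ／ {e}) X := by
  have h := lambda_contractElem_add he hX
  rw [rk_insert_of_notMem_closure ⟨he.mem_ground, heX⟩] at h
  push_cast at h
  omega

lemma ThreeConnected.mem_closure_of_isKSeparation_contractElem [M.Finite]
    (hM : ThreeConnected M) (he : M.IsNonloop e) (hk : k < 3)
    (hX : IsKSeparation (M ／ {e}) k X) : e ∈ M.closure X := by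
  obtain ⟨hXE, hlam, hkX, hkY⟩ := hX
  rw [contract_ground] at hXE hkY
  by_contra heX
  have hlamM := lambda_contractElem_of_notMem_closure he hXE heX
  have hcard := ncard_insert_of_notMem (fun h => h.1.2 rfl : e ∉ (M.E \ {e}) \ X)
    M.ground_finite.sdiff.sdiff
  rw [insert_sdiff_singleton_sdiff he.mem_ground (fun h => (hXE h).2 rfl)] at hcard
  have := hM.le_lambda (hXE.trans sdiff_subset) hk hkX (by omega)
  omega

end Connectivity

section Simplification

variable {M N : Matroid α} {X S T : Set α}

lemma exists_isSimplification (M : Matroid α) : ∃ N, IsSimplification M N := by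
  obtain hα | hα := isEmpty_or_nonempty α
  · exact ⟨M ↾ ∅, ∅, empty_subset _, rfl, by simp, by simp, fun e => isEmptyElim e⟩
  set L := {e | M.IsNonloop e}
  set rep : α → α := fun e => Function.invFunOn (fun f => M.closure {f}) L (M.closure {e})
  have hrepL : ∀ e ∈ L, rep e ∈ L := fun e he => Function.invFunOn_mem ⟨e, he, rfl⟩
  have hrep : ∀ e ∈ L, M.closure {rep e} = M.closure {e} :=
    fun e he => Function.invFunOn_eq (f := fun f => M.closure {f}) ⟨e, he, rfl⟩
  refine ⟨M ↾ (rep '' L), rep '' L, ?_, rfl, ?_, ?_, ?_⟩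
  · rintro _ ⟨e, he, rfl⟩
    exact (hrepL e he).mem_ground
  · rintro _ ⟨e, he, rfl⟩
    exact (hrepL e he).indep
  · rintro _ _ ⟨e, he, rfl⟩ ⟨f, hf, rfl⟩ hef
    have hcl : M.closure {e} = M.closure {f} := by
      rw [← hrep e he, ← hrep f hf, (hrepL e he).closure_eq_of_mem_closure hef]
    simp only [rep, hcl]
  · intro e he hnl
    refine ⟨rep e, mem_image_of_mem rep (indep_singleton.1 hnl), ?_⟩
    rw [hrep e (indep_singleton.1 hnl)]
    exact M.mem_closure_self e he

lemma IsSimplification.ground_subset (hN : IsSimplification M N) : N.E ⊆ M.E := by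
  obtain ⟨W, hWE, rfl, -⟩ := hN
  exact hWE

lemma IsSimplification.finite [M.Finite] (hN : IsSimplification M N) : N.Finite :=
  ⟨M.ground_finite.subset hN.ground_subset⟩

lemma IsSimplification.subset_closure_inter (hN : IsSimplification M N) (hX : X ⊆ M.E) :
    X ⊆ M.closure (N.E ∩ M.closure X) := by
  obtain ⟨W, -, rfl, -, -, hrep⟩ := hN
  intro e heX
  obtain hl | hnl := M.isLoop_or_isNonloop e (hX heX)
  · exact hl.mem_closure _
  obtain ⟨f, hfW, hef⟩ := hrep e (hX heX) hnl.indep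
  have hfX : f ∈ M.closure X :=
    M.closure_subset_closure (singleton_subset_iff.2 heX) (hnl.mem_closure_singleton hef)
  exact M.closure_subset_closure (singleton_subset_iff.2 (mem_inter hfW hfX)) hef

lemma IsSimplification.lambda_eq [M.RankFinite] (hN : IsSimplification M N) (hS : S ⊆ N.E) :
    lambda N S = rk M S + rk M (N.E \ S) - rk M M.E := by
  have hspan : rk M M.E = rk M N.E :=
    le_antisymm (rk_le_of_subset_closure ((hN.subset_closure_inter subset_rfl).trans
      (M.closure_subset_closure inter_subset_left))) (rk_mono hN.ground_subset)
  obtain ⟨W, -, rfl, -⟩ := hN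
  replace hS : S ⊆ W := hS
  simp only [lambda, restrict_ground_eq, rk_restrict hS, rk_restrict sdiff_subset,
    rk_restrict subset_rfl, hspan]

lemma IsSimplification.min_ncard_two_le_rk [M.RankFinite] (hN : IsSimplification M N)
    (hT : T ⊆ N.E) : min T.ncard 2 ≤ rk M T := by
  obtain ⟨W, hWE, rfl, hnl, hpar, -⟩ := hN
  obtain rfl | ⟨t, ht⟩ := T.eq_empty_or_nonempty
  · simp
  have ht1 : rk M {t} = 1 := rk_singleton_of_isNonloop (indep_singleton.1 (hnl t (hT ht)))
  by_cases hTt : T ⊆ {t}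
  · have := ncard_le_ncard hTt (finite_singleton t)
    have := rk_mono (M := M) (singleton_subset_iff.2 ht)
    rw [ncard_singleton] at *
    omega
  obtain ⟨u, hu, hut⟩ := not_subset.1 hTt
  have hu2 : rk M {u, t} = 2 := by
    rw [rk_insert_of_notMem_closure
      ⟨hWE (hT hu), fun h => hut (hpar u t (hT hu) (hT ht) h)⟩, ht1]
  have := rk_mono (M := M) (pair_subset hu ht)
  omega

lemma IsSimplification.two_le_lambda [M.Finite] (hN : IsSimplification M N)
    (hN3 : ThreeConnected N) (hX : X ⊆ M.E) (hX2 : 2 ≤ rk M X) (hY2 : 2 ≤ rk M (M.E \ X)) :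
    2 ≤ lambda M X := by
  set A := N.E ∩ M.closure X
  have hAN : A ⊆ N.E := inter_subset_left
  have hrA : rk M A = rk M X := le_antisymm (rk_le_of_subset_closure inter_subset_right)
    (rk_le_of_subset_closure (hN.subset_closure_inter hX))
  have hR : N.E \ A ⊆ M.E \ X := fun w hw =>
    ⟨hN.ground_subset hw.1, fun hwX => hw.2 ⟨hw.1, M.mem_closure_of_mem' hwX (hX hwX)⟩⟩
  have hrR := rk_mono (M := M) hR
  have hRc := rk_le_ncard (M := M) (M.ground_finite.subset (hR.trans sdiff_subset))
  have hAc := rk_le_ncard (M := M) (M.ground_finite.subset (hAN.trans hN.ground_subset))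
  have hlamA := hN.lambda_eq hAN
  -- if `λ_M(X) ≤ 1` then `λ_N(A) ≤ 1` and, as `r(M) > r(X)`, also `λ_N(A) ≤ |N.E \ A| - 1`
  have hk := hN3.le_lambda hAN (k := min (N.E \ A).ncard 2) (by omega) (by omega) (by omega)
  unfold lambda at *
  push_cast at hk
  omega

lemma IsSimplification.exists_lift [M.RankFinite] (hN : IsSimplification M N) (hS : S ⊆ N.E) :
    ∃ A ⊆ M.E, S ⊆ A ∧ N.E \ S ⊆ M.E \ A ∧ lambda M A ≤ lambda N S := by
  have hsub : ∀ X ⊆ M.E, X ⊆ M.closure (N.E ∩ M.closure X) :=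
    fun X => hN.subset_closure_inter
  have hlam := hN.lambda_eq hS
  obtain ⟨W, hWE, rfl, hnl, hpar, -⟩ := hN
  -- each element goes to the side of its representative; loops, having none, go with `S`
  set A := {e ∈ M.E | W ∩ M.closure {e} ⊆ S}
  have hAS : A ⊆ M.closure S := fun e he =>
    M.closure_subset_closure he.2 (hsub {e} (singleton_subset_iff.2 he.1) rfl)
  have hBS : M.E \ A ⊆ M.closure (W \ S) := by
    rintro e ⟨he, heA⟩
    obtain ⟨f, ⟨hfW, hfe⟩, hfS⟩ := not_subset.1 fun h => heA ⟨he, h⟩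
    have hfWS : f ∈ W \ S := ⟨hfW, hfS⟩
    refine M.closure_subset_closure (singleton_subset_iff.2 hfWS) ?_
    exact (indep_singleton.1 (hnl f hfW)).mem_closure_singleton hfe
  refine ⟨A, sep_subset _ _, fun s hs => ⟨hWE (hS hs), ?_⟩,
    fun w hw => ⟨hWE hw.1, ?_⟩, ?_⟩
  · rintro f ⟨hfW, hfs⟩
    rwa [hpar f s hfW (hS hs) hfs]
  · exact fun hwA => hw.2 (hwA.2 ⟨hw.1, M.mem_closure_self w (hWE hw.1)⟩)
  · have hrA := rk_le_of_subset_closure hAS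
    have hrB := rk_le_of_subset_closure hBS
    rw [hlam, restrict_ground_eq]
    unfold lambda
    omega

lemma IsSimplification.exists_isKSeparation [M.Finite] {k : ℕ} (hN : IsSimplification M N)
    (hS : IsKSeparation N k S) (hk : k ≤ 2) :
    ∃ A, IsKSeparation M k A ∧ k ≤ rk M A ∧ k ≤ rk M (M.E \ A) := by
  obtain ⟨hSN, hlam, hkS, hkS'⟩ := hS
  obtain ⟨A, hAE, hSA, hSB, hlamA⟩ := hN.exists_lift hSN
  have hrA := (hN.min_ncard_two_le_rk hSN).trans (rk_mono hSA)
  have hrB := (hN.min_ncard_two_le_rk sdiff_subset).trans (rk_mono hSB)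
  refine ⟨A, ⟨hAE, hlamA.trans hlam, ?_, ?_⟩, by omega, by omega⟩
  · exact hkS.trans (ncard_le_ncard hSA (M.ground_finite.subset hAE))
  · exact hkS'.trans (ncard_le_ncard hSB (M.ground_finite.subset sdiff_subset))

end Simplification

section VerticalSeparation

variable {M : Matroid α} {X Y A : Set α} {z : α} {k : ℕ}

def IsVerticalThreeSeparation (M : Matroid α) (X : Set α) (z : α) (Y : Set α) : Prop :=
  Disjoint X Y ∧ z ∉ X ∧ z ∉ Y ∧ X ∪ {z} ∪ Y = M.E ∧
    (lambda M (X ∪ {z}) ≤ 2 ∧ 3 ≤ (X ∪ {z}).ncard ∧ 3 ≤ Y.ncard ∧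
      3 ≤ rk M (X ∪ {z}) ∧ 3 ≤ rk M Y) ∧
    (lambda M X ≤ 2 ∧ 3 ≤ X.ncard ∧ 3 ≤ (Y ∪ {z}).ncard ∧
      3 ≤ rk M X ∧ 3 ≤ rk M (Y ∪ {z})) ∧
    z ∈ M.closure X ∩ M.closure Y

lemma isVerticalThreeSeparation_of_mem_closure [M.Finite] (hA : A ⊆ M.E \ {z})
    (hzA : z ∈ M.closure A) (hzB : z ∈ M.closure ((M.E \ {z}) \ A))
    (hlamA : lambda M A ≤ 2) (hlamB : lambda M ((M.E \ {z}) \ A) ≤ 2)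
    (hrA : 3 ≤ rk M A) (hrB : 3 ≤ rk M ((M.E \ {z}) \ A)) :
    IsVerticalThreeSeparation M A z ((M.E \ {z}) \ A) := by
  set B := (M.E \ {z}) \ A
  have hz := M.closure_subset_ground A hzA
  have hzA' : z ∉ A := fun h => (hA h).2 rfl
  have hzB' : z ∉ B := fun h => h.1.2 rfl
  have hBE : B ⊆ M.E := sdiff_subset.trans sdiff_subset
  have hAz : A ∪ {z} = M.E \ B := by
    rw [union_singleton, ← insert_sdiff_singleton_sdiff hz hzB', sdiff_sdiff_cancel_left hA]
  have hBz : B ∪ {z} = M.E \ A := by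
    rw [union_singleton, insert_sdiff_singleton_sdiff hz hzA']
  have hcard : ∀ T ⊆ M.E, 3 ≤ rk M T → 3 ≤ T.ncard :=
    fun T hT h => h.trans (rk_le_ncard (M.ground_finite.subset hT))
  have hrz : ∀ T, 3 ≤ rk M T → 3 ≤ rk M (T ∪ {z}) :=
    fun T h => h.trans (rk_mono subset_union_left)
  refine ⟨disjoint_sdiff_right, hzA', hzB', ?_, ⟨?_, ?_, hcard B hBE hrB, hrz A hrA, hrB⟩,
    ⟨hlamA, hcard A (hA.trans sdiff_subset) hrA, ?_, hrA, hrz B hrB⟩, hzA, hzB⟩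
  · rw [hAz, sdiff_union_of_subset hBE]
  · rwa [hAz, lambda_compl hBE]
  · exact hcard _ (hAz ▸ sdiff_subset) (hrz A hrA)
  · exact hcard _ (hBz ▸ sdiff_subset) (hrz B hrB)

lemma IsVerticalThreeSeparation.not_siThreeConnected [M.Finite]
    (h : IsVerticalThreeSeparation M X z Y) (hM : ThreeConnected M) :
    ¬ SiThreeConnected (M ／ {z}) := by
  obtain ⟨hXY, hzX, hzY, hE, ⟨-, -, -, -, hrY⟩, ⟨hlam, hcX, -, hrX, -⟩, hzclX, hzclY⟩ :=
    h
  have hXz : X ⊆ M.E \ {z} := fun x hx => ⟨hE ▸ Or.inl (Or.inl hx), fun h => hzX (h ▸ hx)⟩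
  have hYX := sdiff_singleton_sdiff_eq hXY hzY hE
  obtain ⟨x, hx⟩ := nonempty_of_ncard_ne_zero (s := X) (by omega)
  have hz := hM.isNonloop (M.closure_subset_ground X hzclX) ⟨x, hXz hx⟩
  have hlamX := lambda_contractElem_of_mem_closure hz hXz hzclX
  have hrX' := rk_contractElem_of_mem_closure hz hXz hzclX
  have hrY' := rk_contractElem_of_mem_closure hz (hYX ▸ sdiff_subset) hzclY
  intro hsi
  obtain ⟨N, hN⟩ := exists_isSimplification (M ／ {z})
  have := hN.two_le_lambda (hsi N hN) hXz (by omega) (by rw [contract_ground, hYX]; omega)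
  omega

lemma ThreeConnected.isVerticalThreeSeparation_of_isKSeparation_contractElem [M.Finite]
    (hM : ThreeConnected M) (hz : M.IsNonloop z) (hk0 : k ≠ 0) (hk : k < 3)
    (hA : IsKSeparation (M ／ {z}) k A) (hrA : k ≤ rk (M ／ {z}) A)
    (hrB : k ≤ rk (M ／ {z}) ((M ／ {z}).E \ A)) :
    IsVerticalThreeSeparation M A z ((M.E \ {z}) \ A) := by
  have hB := hA.compl
  have hAE : A ⊆ M.E \ {z} := hA.1
  have hBE : (M.E \ {z}) \ A ⊆ M.E \ {z} := sdiff_subset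
  have hzA := hM.mem_closure_of_isKSeparation_contractElem hz hk hA
  have hzB := hM.mem_closure_of_isKSeparation_contractElem hz hk hB
  rw [contract_ground] at hzB hB hrB
  have hlamA := lambda_contractElem_of_mem_closure hz hAE hzA
  have hlamB := lambda_contractElem_of_mem_closure hz hBE hzB
  have hrA' := rk_contractElem_of_mem_closure hz hAE hzA
  have hrB' := rk_contractElem_of_mem_closure hz hBE hzB
  have hlamA' := hA.2.1
  have hlamB' := hB.2.1
  obtain rfl : k = 2 := by
    by_contra hk2
    have hAB : A ⊆ M.E \ ((M.E \ {z}) \ A) := fun a ha => ⟨(hAE ha).1, fun h => h.2 ha⟩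
    have := hM.two_le_lambda (hBE.trans sdiff_subset) (by omega)
      ((show 2 ≤ rk M A by omega).trans (rk_mono hAB))
    omega
  exact isVerticalThreeSeparation_of_mem_closure hAE hzA hzB (by omega) (by omega) (by omega)
    (by omega)

lemma ThreeConnected.exists_isVerticalThreeSeparation [M.Finite] (hM : ThreeConnected M)
    (hz : z ∈ M.E) (hsi : ¬ SiThreeConnected (M ／ {z})) :
    ∃ X Y, IsVerticalThreeSeparation M X z Y := by
  obtain ⟨N, hN, hN3⟩ : ∃ N, IsSimplification (M ／ {z}) N ∧ ¬ ThreeConnected N := by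
    simpa [SiThreeConnected] using hsi
  obtain ⟨k, hk, S, hS⟩ : ∃ k < 3, ∃ S, IsKSeparation N k S := by
    simpa [ThreeConnected] using hN3
  have := hN.finite
  have hk0 : k ≠ 0 := by
    rintro rfl
    have := lambda_nonneg hS.1
    have := hS.2.1
    omega
  obtain ⟨A, hA, hrA, hrB⟩ := hN.exists_isKSeparation hS (by omega)
  obtain ⟨a, ha⟩ := nonempty_of_ncard_ne_zero (s := A) (by have := hA.2.2.1; omega)
  have hz' := hM.isNonloop hz ⟨a, hA.1 ha⟩
  exact ⟨A, _, hM.isVerticalThreeSeparation_of_isKSeparation_contractElem hz' hk0 hk hA hrA hrB⟩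

end VerticalSeparation

end NDP

/-- A 3-connected matroid `M` has a vertical 3-separation `(X, {z}, Y)`
iff `si(M/z)` is not 3-connected. -/
theorem statement_14 {α : Type*} (M : Matroid α) [M.Finite] (hM : NDP.ThreeConnected M)
    (z : α) (hz : z ∈ M.E) :
    (∃ X Y : Set α, Disjoint X Y ∧ z ∉ X ∧ z ∉ Y ∧ X ∪ {z} ∪ Y = M.E ∧
      (NDP.lambda M (X ∪ {z}) ≤ 2 ∧ 3 ≤ (X ∪ {z}).ncard ∧ 3 ≤ Y.ncard ∧
        3 ≤ NDP.rk M (X ∪ {z}) ∧ 3 ≤ NDP.rk M Y) ∧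
      (NDP.lambda M X ≤ 2 ∧ 3 ≤ X.ncard ∧ 3 ≤ (Y ∪ {z}).ncard ∧
        3 ≤ NDP.rk M X ∧ 3 ≤ NDP.rk M (Y ∪ {z})) ∧
      z ∈ M.closure X ∩ M.closure Y) ↔
    ¬ NDP.SiThreeConnected (NDP.contract M {z}) :=
  ⟨fun ⟨_, _, h⟩ => NDP.IsVerticalThreeSeparation.not_siThreeConnected h hM,
    hM.exists_isVerticalThreeSeparation hz⟩
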